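/- If tensors U and V in R^{n_1×···×n_d} have tensor-train representations with ranks (r_1,...,r_{d-1}) and (s_1,...,s_{d-1}) respectively, then their Hadamard (element-wise) product U ∘ V admits a tensor-train representation with ranks at most (r_1 s_1, ..., r_{d-1} s_{d-1}). -/
import Mathlib


open scoped BigOperators

/-- Partial left-to-right product of TT cores: the product
`G₁(i₁) G₂(i₂) ⋯ G_m(i_m)` as a matrix of size `r 0 × r m`. -/
def ttPartial {d : ℕ} (r : ℕ → ℕ) (n : Fin d → ℕ)
    (G : (k : Fin d) → Fin (n k) → Matrix (Fin (r k)) (Fin (r (k + 1))) ℝ)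
    (i : (k : Fin d) → Fin (n k)) :
    (m : ℕ) → m ≤ d → Matrix (Fin (r 0)) (Fin (r m)) ℝ
  | 0, _ => 1
  | m + 1, h =>
      ttPartial r n G i m (Nat.le_of_succ_le h) * G ⟨m, h⟩ (i ⟨m, h⟩)

/-- The entry of the tensor represented by the TT cores `G` at multi-index `i`. -/
def ttEntry {d : ℕ} (r : ℕ → ℕ) (n : Fin d → ℕ)
    (G : (k : Fin d) → Fin (n k) → Matrix (Fin (r k)) (Fin (r (k + 1))) ℝ)
    (i : (k : Fin d) → Fin (n k)) : ℝ :=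
  ∑ a, ∑ b, ttPartial r n G i d le_rfl a b

/-- `G` is a tensor-train representation of the tensor `U` with ranks `r`
(where `r 0 = r d = 1`). -/
def IsTTRepr {d : ℕ} {n : Fin d → ℕ} (U : ((k : Fin d) → Fin (n k)) → ℝ)
    (r : ℕ → ℕ)
    (G : (k : Fin d) → Fin (n k) → Matrix (Fin (r k)) (Fin (r (k + 1))) ℝ) : Prop :=
  r 0 = 1 ∧ r d = 1 ∧ ∀ i, U i = ttEntry r n G i


lemma sum_sum_reindex {α β α' β' : Type*} [Fintype α] [Fintype β] [Fintype α'] [Fintype β']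
    (e : α ≃ α') (f : β ≃ β') (M : Matrix α β ℝ) :
    ∑ a', ∑ b', (Matrix.reindex e f M) a' b' = ∑ a, ∑ b, M a b := by
  simp only [Matrix.reindex_apply, Matrix.submatrix_apply]
  exact Fintype.sum_equiv e.symm _ _ (fun a' =>
    Fintype.sum_equiv f.symm _ _ (fun b' => rfl))

lemma sum_sum_kron {α β α' β' : Type*} [Fintype α] [Fintype β] [Fintype α'] [Fintype β']
    (A : Matrix α β ℝ) (B : Matrix α' β' ℝ) :
    ∑ p, ∑ q, Matrix.kroneckerMap (· * ·) A B p q =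
      (∑ a, ∑ b, A a b) * (∑ a, ∑ b, B a b) := by
  simp only [Fintype.sum_prod_type, Matrix.kroneckerMap_apply]
  rw [Finset.sum_mul_sum]
  exact Finset.sum_congr rfl fun a _ => Finset.sum_congr rfl fun a' _ =>
    (Finset.sum_mul_sum _ _ _ _).symm

lemma reindex_one {α α' : Type*} [Fintype α] [Fintype α'] [DecidableEq α] [DecidableEq α']
    (e : α ≃ α') : Matrix.reindex e e (1 : Matrix α α ℝ) = 1 := by
  rw [Matrix.reindex_apply]
  exact Matrix.submatrix_one_equiv e.symm

/-- The Hadamard product of two TT tensors admits a TT representation with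
ranks at most the products of the respective ranks. -/
theorem tt_hadamard_rank_bound {d : ℕ} {n : Fin d → ℕ}
    (U V : ((k : Fin d) → Fin (n k)) → ℝ) (r s : ℕ → ℕ)
    (GU : (k : Fin d) → Fin (n k) → Matrix (Fin (r k)) (Fin (r (k + 1))) ℝ)
    (GV : (k : Fin d) → Fin (n k) → Matrix (Fin (s k)) (Fin (s (k + 1))) ℝ)
    (hU : IsTTRepr U r GU) (hV : IsTTRepr V s GV) :
    ∃ (t : ℕ → ℕ) (H : (k : Fin d) → Fin (n k) → Matrix (Fin (t k)) (Fin (t (k + 1))) ℝ),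
      IsTTRepr (fun i => U i * V i) t H ∧
      ∀ k : ℕ, 0 < k → k < d → t k ≤ r k * s k := by
  classical
  refine ⟨fun k => r k * s k,
    fun k x => Matrix.reindex finProdFinEquiv finProdFinEquiv
      (Matrix.kroneckerMap (· * ·) (GU k x) (GV k x)), ?_, ?_⟩
  · obtain ⟨hr0, hrd, hUe⟩ := hU
    obtain ⟨hs0, hsd, hVe⟩ := hV
    refine ⟨by simp [hr0, hs0], by simp [hrd, hsd], ?_⟩
    intro i
    have key : ∀ (m : ℕ) (h : m ≤ d),
        ttPartial (fun k => r k * s k) n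
          (fun k x => Matrix.reindex finProdFinEquiv finProdFinEquiv
            (Matrix.kroneckerMap (· * ·) (GU k x) (GV k x))) i m h =
        Matrix.reindex finProdFinEquiv finProdFinEquiv
          (Matrix.kroneckerMap (· * ·) (ttPartial r n GU i m h)
            (ttPartial s n GV i m h)) := by
      intro m
      induction m with
      | zero =>
        intro h
        simp only [ttPartial]
        rw [show (Matrix.kroneckerMap (· * ·) (1 : Matrix (Fin (r 0)) (Fin (r 0)) ℝ)
            (1 : Matrix (Fin (s 0)) (Fin (s 0)) ℝ)) = 1 from Matrix.one_kronecker_one,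
          reindex_one]
      | succ m ih =>
        intro h
        simp only [ttPartial, ih (Nat.le_of_succ_le h)]
        rw [Matrix.reindex_apply, Matrix.reindex_apply, Matrix.reindex_apply,
          Matrix.submatrix_mul_equiv, ← Matrix.mul_kronecker_mul]
    simp only [hUe, hVe, ttEntry, key d le_rfl]
    rw [sum_sum_reindex, sum_sum_kron]
  · intro k _ _; exact le_rfl
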